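/- arXiv:math/0303158 — 6 statements merged into one kernel-verified Lean document; each statement's English description precedes it below -/
import Mathlib

section
/- Let g : ℝ → ℝ be locally Lipschitz with g(s) ≥ 0 for all s ≥ 0, let s ≥ 0, and let ρ : [0,∞) → ℝ be differentiable with ρ'(τ) = -2 g(ρ(τ)) ρ(τ) for all τ ≥ 0 and ρ(0) = s. Then 0 ≤ ρ(τ) ≤ s for all τ ≥ 0, and ρ is monotonically nonincreasing on [0,∞). -/
/-!
Along a solution the equation is linear, `ρ' = a(τ) ρ` with the continuous coefficient
`a(τ) = -2 g(ρ(τ))`, so by Grönwall a solution that vanishes once vanishes from then on.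
Hence `ρ` cannot cross zero (intermediate value theorem), and once `ρ ≥ 0` the sign of `g`
makes `ρ' ≤ 0`.
-/

open Set

theorem eq_zero_of_hasDerivWithinAt_smul_self_of_eq_zero {E : Type*} [NormedAddCommGroup E]
    [NormedSpace ℝ E] {a : ℝ → ℝ} {f : ℝ → E} {t₀ T : ℝ} (ha : ContinuousOn a (Icc t₀ T))
    (hf : ContinuousOn f (Icc t₀ T))
    (hf' : ∀ t ∈ Ico t₀ T, HasDerivWithinAt f (a t • f t) (Ici t) t) (h₀ : f t₀ = 0) :
    ∀ t ∈ Icc t₀ T, f t = 0 := by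
  obtain ⟨C, hC⟩ := isCompact_Icc.exists_bound_of_continuousOn ha
  refine eq_zero_of_abs_deriv_le_mul_abs_self_of_eq_zero_right (K := C) hf hf' h₀
    fun t ht => ?_
  rw [norm_smul]
  exact mul_le_mul_of_nonneg_right (hC t (Ico_subset_Icc_self ht)) (norm_nonneg _)

theorem nonneg_of_hasDerivAt_mul_self {h ρ : ℝ → ℝ} (hh : Continuous h)
    (hODE : ∀ τ : ℝ, 0 ≤ τ → HasDerivAt ρ (h (ρ τ) * ρ τ) τ) (h₀ : 0 ≤ ρ 0) :
    ∀ τ : ℝ, 0 ≤ τ → 0 ≤ ρ τ := by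
  have hcont : ContinuousOn ρ (Ici 0) := fun τ hτ =>
    (hODE τ hτ).continuousAt.continuousWithinAt
  intro T hT
  by_contra! hneg
  obtain ⟨t₀, ht₀, hρt₀⟩ : ∃ t₀ ∈ Icc 0 T, ρ t₀ = 0 :=
    intermediate_value_Icc' hT (hcont.mono Icc_subset_Ici_self) ⟨hneg.le, h₀⟩
  have hsub : Icc t₀ T ⊆ Ici 0 := fun t ht => ht₀.1.trans ht.1
  have hzero := eq_zero_of_hasDerivWithinAt_smul_self_of_eq_zero
    (hh.comp_continuousOn (hcont.mono hsub)) (hcont.mono hsub)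
    (fun t ht => (hODE t (hsub (Ico_subset_Icc_self ht))).hasDerivWithinAt) hρt₀
    T ⟨ht₀.2, le_rfl⟩
  exact hneg.ne hzero

theorem antitoneOn_of_hasDerivAt_mul_self {h ρ : ℝ → ℝ}
    (hODE : ∀ τ : ℝ, 0 ≤ τ → HasDerivAt ρ (h (ρ τ) * ρ τ) τ)
    (hρ : ∀ τ : ℝ, 0 ≤ τ → 0 ≤ ρ τ) (hh : ∀ x : ℝ, 0 ≤ x → h x ≤ 0) :
    AntitoneOn ρ (Ici 0) := by
  refine antitoneOn_of_hasDerivWithinAt_nonpos (convex_Ici 0)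
    (fun τ hτ => (hODE τ hτ).continuousAt.continuousWithinAt)
    (fun τ hτ => (hODE τ (interior_subset hτ)).hasDerivWithinAt) fun τ hτ => ?_
  have hρτ := hρ τ (interior_subset hτ)
  exact mul_nonpos_of_nonpos_of_nonneg (hh _ hρτ) hρτ

/-- The ODE ρ' = -2 g(ρ) ρ governing the local density in the nonlinear/damping
split step: for nonnegative damping `g`, the density stays in `[0, s]` and is
nonincreasing on `[0, ∞)`. -/
theorem stmt2 (g : ℝ → ℝ) (hg : LocallyLipschitz g) (hg0 : ∀ s : ℝ, 0 ≤ s → 0 ≤ g s)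
    (s : ℝ) (hs : 0 ≤ s) (ρ : ℝ → ℝ)
    (hODE : ∀ τ : ℝ, 0 ≤ τ → HasDerivAt ρ (-2 * g (ρ τ) * ρ τ) τ)
    (h0 : ρ 0 = s) :
    (∀ τ : ℝ, 0 ≤ τ → 0 ≤ ρ τ ∧ ρ τ ≤ s) ∧ AntitoneOn ρ (Set.Ici 0) := by
  have hnonneg := nonneg_of_hasDerivAt_mul_self (h := fun x => -2 * g x)
    (continuous_const.mul hg.continuous) hODE (h0 ▸ hs)
  have hanti := antitoneOn_of_hasDerivAt_mul_self (h := fun x => -2 * g x) hODE hnonneg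
    fun x hx => by linarith [hg0 x hx]
  refine ⟨fun τ hτ => ⟨hnonneg τ hτ, ?_⟩, hanti⟩
  simpa only [h0] using hanti self_mem_Ici hτ hτ
end

section
/- Let δ₁ > 0, δ₂ > 0, β > 0, let g(ρ) = δ₁ β ρ + δ₂ β² ρ², let s > 0, r > 0, and let h : [0,r] → (0,∞) be differentiable with h'(τ) = -2 g(h(τ)) h(τ) for all τ ∈ [0,r] and h(0) = s. Then ∫_0^r β h(τ) dτ = -(1/(2δ₁)) ln[ h(r) (δ₁ + δ₂ β s) / ( s (δ₁ + δ₂ β h(r)) ) ]. -/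
open Set intervalIntegral

/-!
With g(ρ) = aρ + bρ² the density equation is h' = -2(ah + bh²)h, and along it
log h - log(a + bh) has derivative a h'/(h(a + bh)) = -2ah. Hence
-(1/(2a))(log h - log(a + bh)) is an antiderivative of h, and the phase integral
follows from the fundamental theorem of calculus, with a = δ₁β and b = δ₂β².
-/

theorem HasDerivAt.log_sub_log_const_add_mul {h : ℝ → ℝ} {h' x : ℝ} (a b : ℝ)
    (hh : HasDerivAt h h' x) (hx : h x ≠ 0) (hax : a + b * h x ≠ 0) :
    HasDerivAt (fun τ => Real.log (h τ) - Real.log (a + b * h τ))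
      (a * h' / (h x * (a + b * h x))) x := by
  have hlog := hh.log hx
  have hlog_lin := ((hh.const_mul b).const_add a).log hax
  refine (hlog.sub hlog_lin).congr_deriv ?_
  rw [div_sub_div _ _ hx hax]
  ring

theorem integral_eq_log_of_hasDerivAt_quadratic_loss {a b t₀ t₁ : ℝ} {h : ℝ → ℝ}
    (ha : a ≠ 0) (hne : ∀ τ ∈ uIcc t₀ t₁, h τ ≠ 0)
    (hlin : ∀ τ ∈ uIcc t₀ t₁, a + b * h τ ≠ 0)
    (hODE : ∀ τ ∈ uIcc t₀ t₁, HasDerivAt h (-2 * (a * h τ + b * h τ ^ 2) * h τ) τ) :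
    ∫ τ in t₀..t₁, h τ =
      -(1 / (2 * a)) * Real.log (h t₁ * (a + b * h t₀) / (h t₀ * (a + b * h t₁))) := by
  have hantideriv : ∀ τ ∈ uIcc t₀ t₁, HasDerivAt
      (fun τ => -(1 / (2 * a)) * (Real.log (h τ) - Real.log (a + b * h τ))) (h τ) τ := by
    intro τ hτ
    have hτ₀ := hne τ hτ
    have hτ₁ := hlin τ hτ
    refine (((hODE τ hτ).log_sub_log_const_add_mul a b hτ₀ hτ₁).const_mul _).congr_deriv ?_
    have hfactor : a * (-2 * (a * h τ + b * h τ ^ 2) * h τ) =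
        -2 * a * h τ * (h τ * (a + b * h τ)) := by ring
    rw [hfactor, mul_div_cancel_right₀ _ (mul_ne_zero hτ₀ hτ₁)]
    field_simp
  have hcont : ContinuousOn h (uIcc t₀ t₁) := fun τ hτ =>
    (hODE τ hτ).continuousAt.continuousWithinAt
  rw [integral_eq_sub_of_hasDerivAt hantideriv hcont.intervalIntegrable,
    Real.log_div (mul_ne_zero (hne _ right_mem_uIcc) (hlin _ left_mem_uIcc))
      (mul_ne_zero (hne _ left_mem_uIcc) (hlin _ right_mem_uIcc)),
    Real.log_mul (hne _ right_mem_uIcc) (hlin _ left_mem_uIcc),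
    Real.log_mul (hne _ left_mem_uIcc) (hlin _ right_mem_uIcc)]
  ring

/-- For the focusing cubic NLS with combined two- and three-body loss
g(ρ) = δ₁βρ + δ₂β²ρ², the phase integral G(s,r) = ∫_0^r β h(τ) dτ along a
positive solution of h' = -2 g(h) h, h(0) = s, is
-(1/(2δ₁)) ln[ h(r)(δ₁ + δ₂βs) / (s(δ₁ + δ₂β h(r))) ]. -/
theorem stmt9 (δ₁ δ₂ β : ℝ) (hδ₁ : 0 < δ₁) (hδ₂ : 0 < δ₂) (hβ : 0 < β)
    (g : ℝ → ℝ) (hgdef : ∀ ρ : ℝ, g ρ = δ₁ * β * ρ + δ₂ * β ^ 2 * ρ ^ 2)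
    (s r : ℝ) (hs : 0 < s) (hr : 0 < r)
    (h : ℝ → ℝ) (hpos : ∀ τ ∈ Set.Icc (0:ℝ) r, 0 < h τ)
    (hODE : ∀ τ ∈ Set.Icc (0:ℝ) r, HasDerivAt h (-2 * g (h τ) * h τ) τ)
    (h0 : h 0 = s) :
    (∫ τ in (0:ℝ)..r, β * h τ) =
      -(1 / (2 * δ₁)) *
        Real.log (h r * (δ₁ + δ₂ * β * s) / (s * (δ₁ + δ₂ * β * h r))) := by
  rw [← uIcc_of_le hr.le] at hpos hODE
  simp only [hgdef] at hODE
  have hintegral := integral_eq_log_of_hasDerivAt_quadratic_loss (b := δ₂ * β ^ 2)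
    (by positivity : δ₁ * β ≠ 0) (fun τ hτ => (hpos τ hτ).ne')
    (fun τ hτ => by have := hpos τ hτ; positivity) hODE
  have hrpos := hpos r right_mem_uIcc
  have hcancel : h r * (δ₁ * β + δ₂ * β ^ 2 * s) / (s * (δ₁ * β + δ₂ * β ^ 2 * h r)) =
      h r * (δ₁ + δ₂ * β * s) / (s * (δ₁ + δ₂ * β * h r)) := by
    field_simp
  rw [intervalIntegral.integral_const_mul, hintegral, h0, hcancel]
  field_simp
end

section
/- Let δ₁ > 0, δ₂ > 0, β ∈ ℝ, s ≥ 0 and r ≥ 0. With h(s,τ) = s √δ₁ / √( δ₁ e^{-4τδ₁} + (1 - e^{-4τδ₁}) δ₂ β² s² ), the damping integral satisfies F(s,r) := ∫_0^r ( -δ₁ + δ₂ β² [h(s,τ)]² ) dτ = -δ₁ r + (1/4) ln[ 1 + δ₂ β² s² (e^{4δ₁ r} - 1)/δ₁ ]. -/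
/-!
The denominator of the density flow factors as `δ₁ e^{-4δ₁τ} A(τ)` with the logistic factor
`A(τ) = 1 + k (e^{4δ₁τ} - 1)`, `k = δ₂β²s²/δ₁`. Hence `δ₂β² h(τ)² = A'(τ) / (4 A(τ))`, so
`τ ↦ -δ₁ τ + ¼ log A(τ)` is an antiderivative of the integrand, and `A(0) = 1`.
-/

open intervalIntegral Real Set

section LogisticGrowth

variable {k a : ℝ}

theorem one_le_one_add_mul_exp_sub_one (hk : 0 ≤ k) (ha : 0 ≤ a) {τ : ℝ} (hτ : 0 ≤ τ) :
    1 ≤ 1 + k * (exp (a * τ) - 1) := by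
  have : 1 ≤ exp (a * τ) := one_le_exp (mul_nonneg ha hτ)
  nlinarith

theorem hasDerivAt_one_add_mul_exp_sub_one (τ : ℝ) :
    HasDerivAt (fun τ => 1 + k * (exp (a * τ) - 1)) (k * a * exp (a * τ)) τ := by
  have hexp : HasDerivAt (fun τ => exp (a * τ)) (exp (a * τ) * a) τ :=
    (hasDerivAt_exp (a * τ)).comp τ ((hasDerivAt_id τ).const_mul a |>.congr_deriv (mul_one a))
  exact (((hexp.sub_const 1).const_mul k).const_add 1).congr_deriv (by ring)

theorem intervalIntegrable_mul_exp_div_one_add_mul_exp_sub_one {r : ℝ}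
    (hpos : ∀ τ ∈ uIcc 0 r, 0 < 1 + k * (exp (a * τ) - 1)) :
    IntervalIntegrable (fun τ => k * a * exp (a * τ) / (1 + k * (exp (a * τ) - 1)))
      MeasureTheory.volume 0 r :=
  (ContinuousOn.div (by fun_prop) (by fun_prop) fun τ hτ => (hpos τ hτ).ne').intervalIntegrable

theorem integral_mul_exp_div_one_add_mul_exp_sub_one {r : ℝ}
    (hpos : ∀ τ ∈ uIcc 0 r, 0 < 1 + k * (exp (a * τ) - 1)) :
    ∫ τ in (0 : ℝ)..r, k * a * exp (a * τ) / (1 + k * (exp (a * τ) - 1)) =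
      log (1 + k * (exp (a * r) - 1)) := by
  rw [integral_eq_sub_of_hasDerivAt
    (fun τ hτ => (hasDerivAt_one_add_mul_exp_sub_one τ).log (hpos τ hτ).ne')
    (intervalIntegrable_mul_exp_div_one_add_mul_exp_sub_one hpos)]
  simp

end LogisticGrowth

theorem density_denominator_eq {δ₁ : ℝ} (hδ₁ : 0 < δ₁) (δ₂ β s τ : ℝ) :
    δ₁ * exp (-4 * τ * δ₁) + (1 - exp (-4 * τ * δ₁)) * δ₂ * β ^ 2 * s ^ 2 =
      δ₁ * exp (-4 * τ * δ₁) *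
        (1 + δ₂ * β ^ 2 * s ^ 2 / δ₁ * (exp (4 * δ₁ * τ) - 1)) := by
  rw [show -4 * τ * δ₁ = -(4 * δ₁ * τ) by ring, exp_neg]
  field_simp

theorem damping_density_sq_eq {δ₁ δ₂ : ℝ} (hδ₁ : 0 < δ₁) (hδ₂ : 0 ≤ δ₂) (β s : ℝ) {τ : ℝ}
    (hτ : 0 ≤ τ) :
    δ₂ * β ^ 2 * (s * √δ₁ /
        √(δ₁ * exp (-4 * τ * δ₁) + (1 - exp (-4 * τ * δ₁)) * δ₂ * β ^ 2 * s ^ 2)) ^ 2 =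
      1 / 4 * (δ₂ * β ^ 2 * s ^ 2 / δ₁ * (4 * δ₁) * exp (4 * δ₁ * τ) /
        (1 + δ₂ * β ^ 2 * s ^ 2 / δ₁ * (exp (4 * δ₁ * τ) - 1))) := by
  have hA : 0 < 1 + δ₂ * β ^ 2 * s ^ 2 / δ₁ * (exp (4 * δ₁ * τ) - 1) :=
    one_pos.trans_le <| one_le_one_add_mul_exp_sub_one (by positivity) (by positivity) hτ
  rw [density_denominator_eq hδ₁, div_pow, mul_pow, sq_sqrt hδ₁.le,
    sq_sqrt (mul_pos (mul_pos hδ₁ (exp_pos _)) hA).le, show -4 * τ * δ₁ = -(4 * δ₁ * τ) by ring, exp_neg]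
  field_simp

theorem stmt11_general (δ₁ δ₂ β s r : ℝ) (hδ₁ : 0 < δ₁) (hδ₂ : 0 < δ₂)
    (hr : 0 ≤ r)
    (h : ℝ → ℝ)
    (hdef : ∀ τ : ℝ, h τ = s * Real.sqrt δ₁ /
      Real.sqrt (δ₁ * Real.exp (-4 * τ * δ₁) +
        (1 - Real.exp (-4 * τ * δ₁)) * δ₂ * β ^ 2 * s ^ 2)) :
    (∫ τ in (0:ℝ)..r, (-δ₁ + δ₂ * β ^ 2 * h τ ^ 2)) =
      -δ₁ * r + (1 / 4) *
        Real.log (1 + δ₂ * β ^ 2 * s ^ 2 * (Real.exp (4 * δ₁ * r) - 1) / δ₁) := by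
  set k := δ₂ * β ^ 2 * s ^ 2 / δ₁
  have hpos : ∀ τ ∈ uIcc 0 r, 0 < 1 + k * (exp (4 * δ₁ * τ) - 1) := fun τ hτ =>
    one_pos.trans_le <| one_le_one_add_mul_exp_sub_one (by positivity) (by positivity)
      (by rw [uIcc_of_le hr] at hτ; exact hτ.1)
  have hintegrand : EqOn (fun τ => -δ₁ + δ₂ * β ^ 2 * h τ ^ 2)
      (fun τ => -δ₁ + 1 / 4 * (k * (4 * δ₁) * exp (4 * δ₁ * τ) /
        (1 + k * (exp (4 * δ₁ * τ) - 1)))) (uIcc 0 r) := fun τ hτ => by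
    rw [uIcc_of_le hr] at hτ
    simp only [hdef, damping_density_sq_eq hδ₁ hδ₂.le β s hτ.1, k]
  rw [integral_congr hintegrand, integral_add intervalIntegrable_const
    ((intervalIntegrable_mul_exp_div_one_add_mul_exp_sub_one hpos).const_mul _),
    integral_const_mul, integral_mul_exp_div_one_add_mul_exp_sub_one hpos, integral_const]
  simp only [k, div_mul_eq_mul_div, smul_eq_mul, sub_zero]
  ring

/-- For g(ρ) = -δ₁ + δ₂β²ρ² with density flow
h(s,τ) = s√δ₁/√(δ₁ e^{-4τδ₁} + (1 - e^{-4τδ₁}) δ₂β²s²), the amplitude integral is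
F(s,r) = ∫_0^r g(h(s,τ)) dτ = -δ₁ r + (1/4) ln[1 + δ₂β²s²(e^{4δ₁r} - 1)/δ₁]. -/
theorem stmt11 (δ₁ δ₂ β s r : ℝ) (hδ₁ : 0 < δ₁) (hδ₂ : 0 < δ₂) (hs : 0 ≤ s)
    (hr : 0 ≤ r)
    (h : ℝ → ℝ)
    (hdef : ∀ τ : ℝ, h τ = s * Real.sqrt δ₁ /
      Real.sqrt (δ₁ * Real.exp (-4 * τ * δ₁) +
        (1 - Real.exp (-4 * τ * δ₁)) * δ₂ * β ^ 2 * s ^ 2)) :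
    (∫ τ in (0:ℝ)..r, (-δ₁ + δ₂ * β ^ 2 * h τ ^ 2)) =
      -δ₁ * r + (1 / 4) *
        Real.log (1 + δ₂ * β ^ 2 * s ^ 2 * (Real.exp (4 * δ₁ * r) - 1) / δ₁) :=
  stmt11_general δ₁ δ₂ β s r hδ₁ hδ₂ hr h hdef
end

section
/- Let δ₁ > 0, δ₂ > 0, β > 0, s ≥ 0 and r ≥ 0. With h(s,τ) = s √δ₁ / √( δ₁ e^{-4τδ₁} + (1 - e^{-4τδ₁}) δ₂ β² s² ), the phase integral satisfies G(s,r) := ∫_0^r β h(s,τ) dτ = (1/(2√(δ₁δ₂))) ln[ ( β s √δ₂ e^{2rδ₁} + √( δ₁ + δ₂ β² s² (e^{4rδ₁} - 1) ) ) / ( √δ₁ + β s √δ₂ ) ]. -/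
open intervalIntegral

/-- For the focusing cubic NLS with quintic damping and feeding term
g(ρ) = -δ₁ + δ₂β²ρ², with density flow
h(s,τ) = s√δ₁/√(δ₁ e^{-4τδ₁} + (1 - e^{-4τδ₁}) δ₂β²s²), the phase integral is
G(s,r) = ∫_0^r β h(s,τ) dτ
       = (1/(2√(δ₁δ₂))) ln[(βs√δ₂ e^{2rδ₁} + √(δ₁ + δ₂β²s²(e^{4rδ₁} - 1)))/(√δ₁ + βs√δ₂)]. -/
theorem stmt12 (δ₁ δ₂ β s r : ℝ) (hδ₁ : 0 < δ₁) (hδ₂ : 0 < δ₂) (hβ : 0 < β)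
    (hs : 0 ≤ s) (hr : 0 ≤ r)
    (h : ℝ → ℝ)
    (hdef : ∀ τ : ℝ, h τ = s * Real.sqrt δ₁ /
      Real.sqrt (δ₁ * Real.exp (-4 * τ * δ₁) +
        (1 - Real.exp (-4 * τ * δ₁)) * δ₂ * β ^ 2 * s ^ 2)) :
    (∫ τ in (0:ℝ)..r, β * h τ) =
      (1 / (2 * Real.sqrt (δ₁ * δ₂))) *
        Real.log ((β * s * Real.sqrt δ₂ * Real.exp (2 * r * δ₁) +
            Real.sqrt (δ₁ + δ₂ * β ^ 2 * s ^ 2 * (Real.exp (4 * r * δ₁) - 1))) /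
          (Real.sqrt δ₁ + β * s * Real.sqrt δ₂)) := by
  have hxy : Real.sqrt (δ₁ * δ₂) = Real.sqrt δ₁ * Real.sqrt δ₂ := Real.sqrt_mul hδ₁.le δ₂
  rw [hxy]
  set x := Real.sqrt δ₁ with hxd
  set y := Real.sqrt δ₂ with hyd
  have hx : 0 < x := Real.sqrt_pos.2 hδ₁
  have hy : 0 < y := Real.sqrt_pos.2 hδ₂
  have hx2 : x ^ 2 = δ₁ := Real.sq_sqrt hδ₁.le
  have hy2 : y ^ 2 = δ₂ := Real.sq_sqrt hδ₂.le
  set b := δ₂ * β ^ 2 * s ^ 2 with hbd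
  set k := β * s * y with hkd
  have hb : 0 ≤ b := by positivity
  have hk : 0 ≤ k := by positivity
  have hk2 : k ^ 2 = b := by rw [hkd, hbd, ← hy2]; ring
  set P : ℝ → ℝ := fun τ => δ₁ + b * (Real.exp (4 * τ * δ₁) - 1) with hPd
  have hP : ∀ τ : ℝ, 0 ≤ τ → 0 < P τ := by
    intro τ hτ
    have h1 : 1 ≤ Real.exp (4 * τ * δ₁) := Real.one_le_exp (by positivity)
    have : 0 ≤ b * (Real.exp (4 * τ * δ₁) - 1) := by nlinarith
    simp only [hPd]; linarith
  -- rewrite h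
  have hre : ∀ τ : ℝ, h τ = s * x * Real.exp (2 * τ * δ₁) / Real.sqrt (P τ) := by
    intro τ
    have hEE : Real.exp (-4 * τ * δ₁) * Real.exp (4 * τ * δ₁) = 1 := by
      rw [← Real.exp_add]; ring_nf; exact Real.exp_zero
    have hinner : δ₁ * Real.exp (-4 * τ * δ₁) +
        (1 - Real.exp (-4 * τ * δ₁)) * δ₂ * β ^ 2 * s ^ 2
        = Real.exp (-4 * τ * δ₁) * P τ := by
      simp only [hPd, hbd]; nlinarith [hEE]
    have hsq : Real.sqrt (Real.exp (-4 * τ * δ₁) * P τ)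
        = Real.exp (-2 * τ * δ₁) * Real.sqrt (P τ) := by
      rw [Real.sqrt_mul (Real.exp_nonneg _)]
      congr 1
      rw [← Real.exp_half]
      ring_nf
    rw [hdef τ, hinner, hsq]
    have he : Real.exp (-2 * τ * δ₁) = (Real.exp (2 * τ * δ₁))⁻¹ := by
      rw [← Real.exp_neg]; ring_nf
    rw [he, div_mul_eq_div_div]
    congr 1
    field_simp
  set N : ℝ → ℝ := fun τ => k * Real.exp (2 * τ * δ₁) + Real.sqrt (P τ) with hNd
  set D : ℝ := x + k with hDd
  have hD : 0 < D := by simp only [hDd]; positivity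
  have hN : ∀ τ : ℝ, 0 ≤ τ → 0 < N τ := by
    intro τ hτ
    have := Real.sqrt_pos.2 (hP τ hτ)
    have := Real.exp_pos (2 * τ * δ₁)
    simp only [hNd]; nlinarith
  set c : ℝ := 1 / (2 * (x * y)) with hcd
  set F : ℝ → ℝ := fun τ => c * Real.log (N τ / D) with hFd
  have hderiv : ∀ τ ∈ Set.uIcc (0:ℝ) r, HasDerivAt F (β * h τ) τ := by
    intro τ hτ
    rw [Set.uIcc_of_le hr] at hτ
    obtain ⟨hτ0, hτr⟩ := hτ
    set E := Real.exp (2 * τ * δ₁) with hEd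
    have hE : 0 < E := Real.exp_pos _
    have hE4 : Real.exp (4 * τ * δ₁) = E ^ 2 := by
      rw [hEd, ← Real.exp_nat_mul]; norm_num; ring_nf
    set p := Real.sqrt (P τ) with hpd
    have hp : 0 < p := Real.sqrt_pos.2 (hP τ hτ0)
    have hp2 : p ^ 2 = P τ := Real.sq_sqrt (hP τ hτ0).le
    -- derivative of inner exponент
    have h1 : HasDerivAt (fun t : ℝ => Real.exp (4 * t * δ₁))
        (Real.exp (4 * τ * δ₁) * (4 * δ₁)) τ := by
      have : HasDerivAt (fun t : ℝ => 4 * t * δ₁) (4 * δ₁) τ := by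
        simpa using ((hasDerivAt_id τ).const_mul 4).mul_const δ₁
      exact this.exp
    have hPderiv : HasDerivAt P (b * (Real.exp (4 * τ * δ₁) * (4 * δ₁))) τ := by
      simpa [hPd] using ((h1.sub_const 1).const_mul b).const_add δ₁
    have hsqrtP : HasDerivAt (fun t => Real.sqrt (P t))
        (b * (Real.exp (4 * τ * δ₁) * (4 * δ₁)) / (2 * p)) τ :=
      hPderiv.sqrt (hP τ hτ0).ne'
    have h2 : HasDerivAt (fun t : ℝ => Real.exp (2 * t * δ₁))
        (E * (2 * δ₁)) τ := by
      have : HasDerivAt (fun t : ℝ => 2 * t * δ₁) (2 * δ₁) τ := by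
        simpa using ((hasDerivAt_id τ).const_mul 2).mul_const δ₁
      simpa [hEd] using this.exp
    have hNderiv : HasDerivAt N
        (k * (E * (2 * δ₁)) + b * (Real.exp (4 * τ * δ₁) * (4 * δ₁)) / (2 * p)) τ := by
      simpa [hNd] using (h2.const_mul k).fun_add hsqrtP
    have hNτ : 0 < N τ := hN τ hτ0
    have hNDne : N τ / D ≠ 0 := by positivity
    have hFderiv : HasDerivAt F
        (c * ((k * (E * (2 * δ₁)) + b * (Real.exp (4 * τ * δ₁) * (4 * δ₁)) / (2 * p)) / D
          / (N τ / D))) τ := by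
      exact ((hNderiv.div_const D).log hNDne).const_mul c
    convert hFderiv using 1
    rw [hre τ]
    have hNτ' : N τ = k * E + p := by simp only [hNd, hEd, hpd]
    rw [hNτ', hE4]
    rw [show Real.exp (2 * τ * δ₁) = E from rfl, show Real.sqrt (P τ) = p from rfl]
    rw [hcd, hDd]
    field_simp
    rw [← hx2]
    linear_combination (-(4*x^2*E*p*(x+k)*(k*E+p)))*hkd + (4*x^2*E^2*p*(x+k))*hk2 + (4*β^2*s^2*x^2*E - 4*β^2*s^2*x^3*E^2*p - 4*β^3*s^3*x^2*y*E^2*p)*hy2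
  have hint : IntervalIntegrable (fun τ => β * h τ) MeasureTheory.volume 0 r := by
    apply ContinuousOn.intervalIntegrable
    rw [Set.uIcc_of_le hr]
    simp only [hre]
    apply ContinuousOn.mul continuousOn_const
    apply ContinuousOn.div
    · fun_prop
    · fun_prop
    · intro τ hτ
      exact (Real.sqrt_pos.2 (hP τ hτ.1)).ne'
  have := intervalIntegral.integral_eq_sub_of_hasDerivAt hderiv hint
  rw [this]
  have hF0 : F 0 = 0 := by
    have : N 0 = D := by
      simp only [hNd, hDd, hPd]
      norm_num
      rw [hxd]
      ring
    simp [hFd, this, Real.log_one, div_self hD.ne']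
  have hFr : F r = c * Real.log ((k * Real.exp (2 * r * δ₁) +
      Real.sqrt (δ₁ + b * (Real.exp (4 * r * δ₁) - 1))) / D) := by
    simp only [hFd, hNd, hPd]
  rw [hF0, hFr, hcd, hDd]
  ring_nf
end

section
/- Let δ₁ > 0, δ₂ > 0, s ≥ 0 and r ≥ 0. With h(s,τ) = s δ₁ / ( s δ₂ (1 - e^{-2τδ₁}) + δ₁ e^{-2τδ₁} ), the phase integral satisfies G(s,r) := ∫_0^r h(s,τ) dτ = (1/(2δ₂)) ln[ ( δ₁ - s δ₂ + s δ₂ e^{2rδ₁} ) / δ₁ ]. -/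
open intervalIntegral

namespace Real

lemma sub_add_mul_exp_pos {a b x : ℝ} (ha : 0 < a) (hb : 0 ≤ b) (hx : 0 ≤ x) :
    0 < a - b + b * exp x := by
  nlinarith [one_le_exp hx]

lemma mul_one_sub_exp_neg_add_mul_exp_neg (a b x : ℝ) :
    b * (1 - exp (-x)) + a * exp (-x) = exp (-x) * (a - b + b * exp x) := by
  have : exp (-x) * exp x = 1 := by rw [← exp_add, neg_add_cancel, exp_zero]
  linear_combination (-b) * this

/-- Multiplying through by `exp (c * τ)` shows that the integrand is the logarithmic derivative
of `τ ↦ a - b + b * exp (c * τ)`. -/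
theorem integral_div_mul_one_sub_exp_neg_add_mul_exp_neg {a b c r : ℝ} (ha : 0 < a)
    (hb : 0 ≤ b) (hc : 0 ≤ c) (hr : 0 ≤ r) :
    (∫ τ in (0:ℝ)..r, b * c / (b * (1 - exp (-c * τ)) + a * exp (-c * τ))) =
      log ((a - b + b * exp (c * r)) / a) := by
  have hD : ∀ τ ∈ Set.uIcc 0 r, 0 < a - b + b * exp (c * τ) := by
    rw [Set.uIcc_of_le hr]
    exact fun τ hτ => sub_add_mul_exp_pos ha hb (mul_nonneg hc hτ.1)
  have hden : ∀ τ ∈ Set.uIcc 0 r, b * (1 - exp (-c * τ)) + a * exp (-c * τ) ≠ 0 := by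
    intro τ hτ
    rw [neg_mul, mul_one_sub_exp_neg_add_mul_exp_neg]
    exact (mul_pos (exp_pos _) (hD τ hτ)).ne'
  have hderiv : ∀ τ ∈ Set.uIcc 0 r, HasDerivAt (fun t => log (a - b + b * exp (c * t)))
      (b * c / (b * (1 - exp (-c * τ)) + a * exp (-c * τ))) τ := by
    intro τ hτ
    have hlog := ((((hasDerivAt_id τ).const_mul c).exp.const_mul b).const_add (a - b)).log
      (hD τ hτ).ne'
    refine hlog.congr_deriv ?_
    simp only [id, mul_one]
    rw [neg_mul, mul_one_sub_exp_neg_add_mul_exp_neg, exp_neg]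
    field_simp
  have hint : IntervalIntegrable
      (fun τ => b * c / (b * (1 - exp (-c * τ)) + a * exp (-c * τ))) MeasureTheory.volume 0 r :=
    (continuousOn_const.div (by fun_prop) hden).intervalIntegrable
  rw [integral_eq_sub_of_hasDerivAt hderiv hint, log_div (hD r Set.right_mem_uIcc).ne' ha.ne']
  simp

end Real

/-- For the complex Ginzburg–Landau equation (σ = 1, β = 1), with density flow
h(s,τ) = sδ₁/(sδ₂(1 - e^{-2τδ₁}) + δ₁ e^{-2τδ₁}), the phase integral is
G(s,r) = ∫_0^r h(s,τ) dτ = (1/(2δ₂)) ln[(δ₁ - sδ₂ + sδ₂ e^{2rδ₁})/δ₁]. -/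
theorem stmt15 (δ₁ δ₂ s r : ℝ) (hδ₁ : 0 < δ₁) (hδ₂ : 0 < δ₂) (hs : 0 ≤ s)
    (hr : 0 ≤ r)
    (h : ℝ → ℝ)
    (hdef : ∀ τ : ℝ, h τ = s * δ₁ /
      (s * δ₂ * (1 - Real.exp (-2 * τ * δ₁)) + δ₁ * Real.exp (-2 * τ * δ₁))) :
    (∫ τ in (0:ℝ)..r, h τ) =
      (1 / (2 * δ₂)) *
        Real.log ((δ₁ - s * δ₂ + s * δ₂ * Real.exp (2 * r * δ₁)) / δ₁) := by
  have hh : h = fun τ => 1 / (2 * δ₂) * (s * δ₂ * (2 * δ₁) /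
      (s * δ₂ * (1 - Real.exp (-(2 * δ₁) * τ)) + δ₁ * Real.exp (-(2 * δ₁) * τ))) := by
    funext τ
    rw [hdef, show -2 * τ * δ₁ = -(2 * δ₁) * τ by ring]
    field_simp
  rw [hh, integral_const_mul, Real.integral_div_mul_one_sub_exp_neg_add_mul_exp_neg hδ₁
    (mul_nonneg hs hδ₂.le) (by positivity) hr, mul_right_comm 2 r]
end

section
/- Let M be a positive even integer, a < b real, h = (b-a)/M, x_j = a + j h, μ_l = π l/(b-a), and k > 0. Let V : ℝ → ℝ and let F, G : ℝ × ℝ → ℝ satisfy F(s,τ) ≥ 0 for all s ≥ 0, τ ≥ 0. Given a vector ψⁿ ∈ ℂ^{M+1} with ψⁿ_0 = ψⁿ_M = 0, define: ψ*_j = exp( -F(|ψⁿ_j|², k/2) + i[ -V(x_j) k/2 + G(|ψⁿ_j|², k/2) ] ) ψⁿ_j for j = 1,…,M-1; Û_l = (2/M) ∑_{j=1}^{M-1} ψ*_j sin(μ_l (x_j - a)) for l = 1,…,M-1; ψ**_j = ∑_{l=1}^{M-1} e^{-i k μ_l²/2} Û_l sin(μ_l (x_j - a)) for j = 1,…,M-1;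 and ψ^{n+1}_j = exp( -F(|ψ**_j|², k/2) + i[ -V(x_j) k/2 + G(|ψ**_j|², k/2) ] ) ψ**_j, with ψ^{n+1}_0 = ψ^{n+1}_M = 0. Then ‖ψ^{n+1}‖_{l²} ≤ ‖ψⁿ‖_{l²}, where ‖U‖_{l²}² = ((b-a)/M) ∑_{j=1}^{M-1} |U_j|². Consequently the time-splitting sine-spectral scheme is unconditionally stable: for every mesh size h > 0 and time step k > 0 and every n, ‖ψⁿ‖_{l²} ≤ ‖ψ⁰‖_{l²}. -/
open Real Finset



lemma cos_sum_even (M : ℕ) (hM : 0 < M) (e : ℤ) (he : ¬ ((M:ℤ) ∣ e)) :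
    ∑ j ∈ range M, Real.cos (2 * π * e * j / M) = 0 := by
  have hMne : (M:ℂ) ≠ 0 := Nat.cast_ne_zero.2 hM.ne'
  have h2π : (2 * (π:ℂ) * Complex.I : ℂ) ≠ 0 := by
    simp [Real.pi_ne_zero, Complex.I_ne_zero, Complex.ofReal_ne_zero]
  set ζ : ℂ := Complex.exp (2 * π * e / M * Complex.I) with hζ
  have hz1 : ζ ≠ 1 := by
    rw [hζ, Ne, Complex.exp_eq_one_iff]
    rintro ⟨n, hn⟩
    apply he
    refine ⟨n, ?_⟩
    have h1 : ((e : ℂ)/M) * (2*π*Complex.I) = (n:ℂ) * (2*π*Complex.I) := by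
      rw [← hn]; ring
    have h2 : ((e : ℂ)/M) = (n:ℂ) := mul_right_cancel₀ h2π h1
    have h3 : (e : ℂ) = (M:ℂ) * n := by
      field_simp at h2; rw [h2]
    exact_mod_cast h3
  have hzM : ζ ^ M = 1 := by
    rw [hζ, ← Complex.exp_nat_mul]
    have : (M:ℂ) * (2 * π * e / M * Complex.I) = e * (2 * π * Complex.I) := by
      field_simp
    rw [this, Complex.exp_int_mul_two_pi_mul_I]
  have hsum : ∑ j ∈ range M, ζ ^ j = 0 := by
    rw [geom_sum_eq hz1, hzM]; simp
  have hterm : ∀ j : ℕ, (ζ ^ j).re = Real.cos (2 * π * e * j / M) := by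
    intro j
    have : ζ ^ j = Complex.exp (((2 * π * e * j / M : ℝ) : ℂ) * Complex.I) := by
      rw [hζ, ← Complex.exp_nat_mul]
      congr 1
      push_cast
      ring
    rw [this, Complex.exp_ofReal_mul_I_re]
  calc ∑ j ∈ range M, Real.cos (2 * π * e * j / M)
      = (∑ j ∈ range M, ζ ^ j).re := by
        rw [Complex.re_sum]; exact Finset.sum_congr rfl fun j _ => (hterm j).symm
    _ = 0 := by rw [hsum]; rfl


lemma cos_sum_odd (M : ℕ) (hM : 0 < M) (d : ℤ) (hd : Odd d) :
    ∑ j ∈ range M, Real.cos (π * d * j / M) = 1 := by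
  have hMne : (M:ℝ) ≠ 0 := Nat.cast_ne_zero.2 hM.ne'
  obtain ⟨c, hc⟩ := hd
  have hsplit : ∑ j ∈ range M, Real.cos (π * d * j / M)
      = Real.cos (π * d * 0 / M) + ∑ j ∈ Ico 1 M, Real.cos (π * d * j / M) := by
    rw [range_eq_Ico, Finset.sum_eq_sum_Ico_succ_bot hM]
    norm_num
  have hneg : ∀ j ∈ Ico 1 M,
      Real.cos (π * d * ((M - j : ℕ):ℝ) / M) = - Real.cos (π * d * j / M) := by
    intro j hj
    simp only [mem_Ico] at hj
    have hjle : j ≤ M := hj.2.le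
    rw [Nat.cast_sub hjle]
    have harg : π * d * ((M:ℝ) - j) / M = (π - π * d * j / M) + c * (2 * π) := by
      have : (d : ℝ) = 2 * c + 1 := by exact_mod_cast hc
      field_simp [this]
      rw [this]; ring
    rw [harg, Real.cos_add_int_mul_two_pi, Real.cos_pi_sub]
  have hS1 : ∑ j ∈ Ico 1 M, Real.cos (π * d * j / M) = 0 := by
    have hbij : ∑ j ∈ Ico 1 M, Real.cos (π * d * j / M)
        = ∑ j ∈ Ico 1 M, Real.cos (π * d * ((M - j : ℕ):ℝ) / M) := by
      refine Finset.sum_nbij' (fun j => M - j) (fun j => M - j) ?_ ?_ ?_ ?_ (fun a _ => rfl) |>.symm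
      · intro j hj; simp only [mem_Ico] at hj ⊢; omega
      · intro j hj; simp only [mem_Ico] at hj ⊢; omega
      · intro j hj; simp only [mem_Ico] at hj ⊢; omega
      · intro j hj; simp only [mem_Ico] at hj ⊢; omega

    have h2 : ∑ j ∈ Ico 1 M, Real.cos (π * d * j / M)
        = - ∑ j ∈ Ico 1 M, Real.cos (π * d * j / M) := by
      calc ∑ j ∈ Ico 1 M, Real.cos (π * d * j / M)
          = ∑ j ∈ Ico 1 M, Real.cos (π * d * ((M - j : ℕ):ℝ) / M) := hbij
        _ = ∑ j ∈ Ico 1 M, - Real.cos (π * d * j / M) := Finset.sum_congr rfl hneg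
        _ = - ∑ j ∈ Ico 1 M, Real.cos (π * d * j / M) := by rw [Finset.sum_neg_distrib]
    linarith
  rw [hsplit, hS1]
  norm_num


lemma not_dvd_small (M : ℕ) (e : ℤ) (h0 : e ≠ 0) (habs : |e| < M) : ¬ ((M:ℤ) ∣ e) := by
  intro h
  have := Int.le_of_dvd (abs_pos.2 h0) ((dvd_abs _ _).2 h)
  linarith

lemma sin_mul_sin (A B : ℝ) :
    Real.sin A * Real.sin B = (Real.cos (A - B) - Real.cos (A + B)) / 2 := by
  have h := Real.cos_sub_cos (A - B) (A + B)
  have e1 : (A - B + (A + B))/2 = A := by ring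
  have e2 : (A - B - (A + B))/2 = -B := by ring
  rw [e1, e2, Real.sin_neg] at h
  linear_combination -h / 2

lemma sin_orth (M : ℕ) (hM : 0 < M) (l m : ℕ)
    (hl : l ∈ Finset.Icc 1 (M-1)) (hm : m ∈ Finset.Icc 1 (M-1)) :
    ∑ j ∈ Finset.Icc 1 (M-1), Real.sin (π * l * j / M) * Real.sin (π * m * j / M)
      = if l = m then (M:ℝ)/2 else 0 := by
  simp only [mem_Icc] at hl hm
  have hl1 := hl.1; have hl2 : l ≤ M - 1 := hl.2
  have hm1 := hm.1; have hm2 : m ≤ M - 1 := hm.2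
  have hlM : l < M := by omega
  have hmM : m < M := by omega
  have hMne : (M:ℝ) ≠ 0 := Nat.cast_ne_zero.2 hM.ne'
  -- extend to range M
  have hIcc : Finset.Icc 1 (M-1) = Finset.Ico 1 M := by
    rw [← Finset.Ico_add_one_right_eq_Icc]
    congr 1
    omega
  have hext : ∑ j ∈ Finset.Icc 1 (M-1), Real.sin (π * l * j / M) * Real.sin (π * m * j / M)
      = ∑ j ∈ range M, Real.sin (π * l * j / M) * Real.sin (π * m * j / M) := by
    rw [hIcc, range_eq_Ico, Finset.sum_eq_sum_Ico_succ_bot hM]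
    norm_num
  rw [hext]
  have hsplit : ∑ j ∈ range M, Real.sin (π * l * j / M) * Real.sin (π * m * j / M)
      = ((∑ j ∈ range M, Real.cos (π * ((((l:ℤ) - m) : ℤ) : ℝ) * j / M))
        - (∑ j ∈ range M, Real.cos (π * ((((l:ℤ) + m) : ℤ) : ℝ) * j / M))) / 2 := by
    rw [← Finset.sum_sub_distrib, Finset.sum_div]
    refine Finset.sum_congr rfl fun j _ => ?_
    rw [sin_mul_sin]
    congr 2 <;> push_cast <;> ring_nf
  rw [hsplit]
  by_cases hlm : l = m
  · subst hlm
    have h1 : ∑ j ∈ range M, Real.cos (π * ((((l:ℤ) - l) : ℤ) : ℝ) * j / M) = M := by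
      simp
    have h2 : ∑ j ∈ range M, Real.cos (π * ((((l:ℤ) + l) : ℤ) : ℝ) * j / M) = 0 := by
      have := cos_sum_even M hM l (not_dvd_small M l (Int.natCast_ne_zero.mpr (by omega)) (by
        rw [abs_of_nonneg (by positivity)]; exact_mod_cast hlM))
      rw [← this]
      refine Finset.sum_congr rfl fun j _ => ?_
      congr 1
      push_cast; ring
    rw [h1, h2]
    simp
  · rw [if_neg hlm]
    rcases Int.even_or_odd ((l:ℤ) + m) with he | ho
    · -- both even
      obtain ⟨e2, he2⟩ := he
      have he1 : (l:ℤ) - m = (e2 - m) + (e2 - m) := by omega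
      set e1 : ℤ := e2 - (m:ℤ) with he1def
      have h1 : ∑ j ∈ range M, Real.cos (π * ((((l:ℤ) - m) : ℤ) : ℝ) * j / M) = 0 := by
        have hne : e1 ≠ 0 := by
          intro h; apply hlm; omega
        have habs : |e1| < M := by
          rw [abs_lt]; omega
        have := cos_sum_even M hM e1 (not_dvd_small M e1 hne habs)
        rw [← this]
        refine Finset.sum_congr rfl fun j _ => ?_
        congr 1
        rw [he1]; push_cast; ring
      have h2 : ∑ j ∈ range M, Real.cos (π * ((((l:ℤ) + m) : ℤ) : ℝ) * j / M) = 0 := by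
        have hne : e2 ≠ 0 := by omega
        have habs : |e2| < M := by rw [abs_lt]; omega
        have := cos_sum_even M hM e2 (not_dvd_small M e2 hne habs)
        rw [← this]
        refine Finset.sum_congr rfl fun j _ => ?_
        congr 1
        rw [he2]; push_cast; ring
      rw [h1, h2]; norm_num
    · -- both odd
      have ho1 : Odd ((l:ℤ) - m) := by
        obtain ⟨c, hc⟩ := ho
        exact ⟨c - m, by omega⟩
      rw [cos_sum_odd M hM _ ho1, cos_sum_odd M hM _ ho]
      norm_num


lemma key_cast (w : ℂ) : ((‖w‖^2 : ℝ) : ℂ) = w * (starRingEnd ℂ) w := by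
  rw [Complex.mul_conj, Complex.sq_norm]

lemma parseval (M : ℕ) (hM : 0 < M) (g : ℕ → ℂ) :
    ∑ j ∈ Finset.Icc 1 (M-1), ‖∑ l ∈ Finset.Icc 1 (M-1),
        g l * ((Real.sin (π * l * j / M) : ℝ) : ℂ)‖^2
      = (M:ℝ)/2 * ∑ l ∈ Finset.Icc 1 (M-1), ‖g l‖^2 := by
  set T := Finset.Icc 1 (M-1) with hT
  apply Complex.ofReal_injective
  set c := starRingEnd ℂ with hc
  rw [Complex.ofReal_sum, Complex.ofReal_mul, Complex.ofReal_sum]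
  simp only [key_cast]
  calc ∑ j ∈ T, (∑ l ∈ T, g l * ((Real.sin (π * l * j / M) : ℝ) : ℂ)) *
          c (∑ l ∈ T, g l * ((Real.sin (π * l * j / M) : ℝ) : ℂ))
      = ∑ l ∈ T, ∑ l' ∈ T, (g l * c (g l')) *
          ((∑ j ∈ T, Real.sin (π * l * j / M) * Real.sin (π * l' * j / M) : ℝ) : ℂ) := by
        calc ∑ j ∈ T, (∑ l ∈ T, g l * ((Real.sin (π * l * j / M) : ℝ) : ℂ)) *
              c (∑ l ∈ T, g l * ((Real.sin (π * l * j / M) : ℝ) : ℂ))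
            = ∑ j ∈ T, ∑ l ∈ T, ∑ l' ∈ T, (g l * c (g l')) *
                ((Real.sin (π * l * j / M) * Real.sin (π * l' * j / M) : ℝ) : ℂ) := by
              refine Finset.sum_congr rfl fun j _ => ?_
              rw [map_sum, Finset.sum_mul_sum]
              refine Finset.sum_congr rfl fun l _ => Finset.sum_congr rfl fun l' _ => ?_
              rw [map_mul, Complex.conj_ofReal, Complex.ofReal_mul]
              ring
          _ = ∑ l ∈ T, ∑ l' ∈ T, (g l * c (g l')) *
                ((∑ j ∈ T, Real.sin (π * l * j / M) * Real.sin (π * l' * j / M) : ℝ) : ℂ) := by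
              rw [Finset.sum_comm]
              refine Finset.sum_congr rfl fun l _ => ?_
              rw [Finset.sum_comm]
              refine Finset.sum_congr rfl fun l' _ => ?_
              rw [Complex.ofReal_sum, Finset.mul_sum]
    _ = ∑ l ∈ T, (g l * c (g l)) * (((M:ℝ)/2 : ℝ) : ℂ) := by
        refine Finset.sum_congr rfl fun l hl => ?_
        rw [Finset.sum_eq_single_of_mem l hl]
        · rw [sin_orth M hM l l hl hl, if_pos rfl]
        · intro l' hl' hne
          rw [sin_orth M hM l l' hl hl', if_neg (Ne.symm hne)]
          simp
    _ = ((((M:ℝ)/2 : ℝ)) : ℂ) * ∑ l ∈ T, g l * c (g l) := by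
        rw [Finset.mul_sum]
        refine Finset.sum_congr rfl fun l _ => ?_
        push_cast
        ring

lemma damp_norm (Fv r : ℝ) (hFv : 0 ≤ Fv) (w : ℂ) :
    ‖Complex.exp (((-Fv : ℝ) : ℂ) + Complex.I * ((r:ℝ):ℂ)) * w‖ ≤ ‖w‖ := by
  rw [norm_mul, Complex.norm_exp]
  have hre : (((-Fv : ℝ) : ℂ) + Complex.I * ((r:ℝ):ℂ)).re = -Fv := by
    simp
  rw [hre]
  calc Real.exp (-Fv) * ‖w‖ ≤ 1 * ‖w‖ := by
        apply mul_le_mul_of_nonneg_right _ (norm_nonneg w)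
        rw [Real.exp_le_one_iff]; linarith
    _ = ‖w‖ := one_mul _

/-- Unconditional stability of the time-splitting sine-spectral (TSSP) scheme for
the damped NLS: if the amplitude factor F is nonnegative, then each TSSP step does
not increase the discrete l² norm, and consequently ‖ψⁿ‖_{l²} ≤ ‖ψ⁰‖_{l²} for all
n, for every mesh size and time step. -/
theorem stmt18 (M : ℕ) (hM : 0 < M) (hMeven : Even M)
    (a b : ℝ) (hab : a < b) (k : ℝ) (hk : 0 < k)
    (V : ℝ → ℝ) (F G : ℝ → ℝ → ℝ)
    (hF : ∀ s : ℝ, 0 ≤ s → ∀ τ : ℝ, 0 ≤ τ → 0 ≤ F s τ)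
    (x : ℕ → ℝ) (hx : ∀ j : ℕ, x j = a + j * ((b - a) / M))
    (μ : ℕ → ℝ) (hμ : ∀ l : ℕ, μ l = π * l / (b - a))
    (ψ ψs ψss Uhat : ℕ → ℕ → ℂ)
    (hbc : ∀ n : ℕ, ψ n 0 = 0 ∧ ψ n M = 0)
    (hstar : ∀ n : ℕ, ∀ j ∈ Finset.Icc 1 (M - 1),
      ψs n j = Complex.exp ((-F (‖ψ n j‖ ^ 2) (k / 2) : ℝ) +
          Complex.I * ((-V (x j) * k / 2 + G (‖ψ n j‖ ^ 2) (k / 2) : ℝ) : ℂ)) * ψ n j)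
    (hhat : ∀ n : ℕ, ∀ l ∈ Finset.Icc 1 (M - 1),
      Uhat n l = (2 / M : ℂ) *
        ∑ j ∈ Finset.Icc 1 (M - 1), ψs n j * (Real.sin (μ l * (x j - a)) : ℂ))
    (hss : ∀ n : ℕ, ∀ j ∈ Finset.Icc 1 (M - 1),
      ψss n j = ∑ l ∈ Finset.Icc 1 (M - 1),
        Complex.exp (-Complex.I * ((k * μ l ^ 2 / 2 : ℝ) : ℂ)) * Uhat n l *
          (Real.sin (μ l * (x j - a)) : ℂ))
    (hnext : ∀ n : ℕ, ∀ j ∈ Finset.Icc 1 (M - 1),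
      ψ (n + 1) j = Complex.exp ((-F (‖ψss n j‖ ^ 2) (k / 2) : ℝ) +
          Complex.I * ((-V (x j) * k / 2 + G (‖ψss n j‖ ^ 2) (k / 2) : ℝ) : ℂ)) * ψss n j) :
    (∀ n : ℕ,
      Real.sqrt (((b - a) / M) * ∑ j ∈ Finset.Icc 1 (M - 1), ‖ψ (n + 1) j‖ ^ 2) ≤
        Real.sqrt (((b - a) / M) * ∑ j ∈ Finset.Icc 1 (M - 1), ‖ψ n j‖ ^ 2)) ∧
    (∀ n : ℕ,
      Real.sqrt (((b - a) / M) * ∑ j ∈ Finset.Icc 1 (M - 1), ‖ψ n j‖ ^ 2) ≤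
        Real.sqrt (((b - a) / M) * ∑ j ∈ Finset.Icc 1 (M - 1), ‖ψ 0 j‖ ^ 2)) := by
  have hba : b - a ≠ 0 := sub_ne_zero.2 hab.ne'
  have hMneR : (M:ℝ) ≠ 0 := Nat.cast_ne_zero.2 hM.ne'
  have harg : ∀ l j : ℕ, μ l * (x j - a) = π * l * j / M := by
    intro l j
    rw [hx, hμ]
    field_simp
    ring
  set T := Finset.Icc 1 (M-1) with hT
  -- key step inequality on the plain sums
  have step : ∀ n : ℕ, ∑ j ∈ T, ‖ψ (n+1) j‖^2 ≤ ∑ j ∈ T, ‖ψ n j‖^2 := by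
    intro n
    -- ψ(n+1) vs ψss
    have h1 : ∑ j ∈ T, ‖ψ (n+1) j‖^2 ≤ ∑ j ∈ T, ‖ψss n j‖^2 := by
      refine Finset.sum_le_sum fun j hj => ?_
      rw [hnext n j hj]
      have hd := damp_norm (F (‖ψss n j‖ ^ 2) (k / 2))
        (-V (x j) * k / 2 + G (‖ψss n j‖ ^ 2) (k / 2))
        (hF _ (by positivity) _ (by linarith)) (ψss n j)
      have := pow_le_pow_left₀ (norm_nonneg _) hd 2
      simpa using this
    -- ψss vs Uhat (Parseval)
    have h2 : ∑ j ∈ T, ‖ψss n j‖^2 = (M:ℝ)/2 * ∑ l ∈ T, ‖Uhat n l‖^2 := by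
      have hrw : ∑ j ∈ T, ‖ψss n j‖^2 = ∑ j ∈ T, ‖∑ l ∈ T,
          (Complex.exp (-Complex.I * ((k * μ l ^ 2 / 2 : ℝ) : ℂ)) * Uhat n l) *
            ((Real.sin (π * l * j / M) : ℝ) : ℂ)‖^2 := by
        refine Finset.sum_congr rfl fun j hj => ?_
        rw [hss n j hj]
        have hsumeq : (∑ l ∈ T, Complex.exp (-Complex.I * ((k * μ l ^ 2 / 2 : ℝ) : ℂ)) * Uhat n l *
              ((Real.sin (μ l * (x j - a)) : ℝ) : ℂ))
            = ∑ l ∈ T, (Complex.exp (-Complex.I * ((k * μ l ^ 2 / 2 : ℝ) : ℂ)) * Uhat n l) *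
              ((Real.sin (π * l * j / M) : ℝ) : ℂ) := by
          refine Finset.sum_congr rfl fun l _ => ?_
          rw [harg]
        rw [hsumeq]
      rw [hrw, parseval M hM]
      congr 1
      refine Finset.sum_congr rfl fun l _ => ?_
      rw [norm_mul, Complex.norm_exp]
      have hre0 : (-Complex.I * ((k * μ l ^ 2 / 2 : ℝ) : ℂ)).re = 0 := by
        set r : ℝ := k * μ l ^ 2 / 2 with hr
        simp [Complex.mul_re]
      rw [hre0, Real.exp_zero, one_mul]
    -- Uhat vs ψs (Parseval)
    have h3 : ∑ l ∈ T, ‖Uhat n l‖^2 = 2/(M:ℝ) * ∑ j ∈ T, ‖ψs n j‖^2 := by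
      have hrw : ∑ l ∈ T, ‖Uhat n l‖^2 = ∑ l ∈ T, (2/(M:ℝ))^2 *
          ‖∑ j ∈ T, ψs n j * ((Real.sin (π * j * l / M) : ℝ) : ℂ)‖^2 := by
        refine Finset.sum_congr rfl fun l hl => ?_
        rw [hhat n l hl]
        have hsum : (∑ j ∈ T, ψs n j * ((Real.sin (μ l * (x j - a)) : ℝ) : ℂ))
            = ∑ j ∈ T, ψs n j * ((Real.sin (π * j * l / M) : ℝ) : ℂ) := by
          refine Finset.sum_congr rfl fun j _ => ?_
          rw [harg]
          congr 3
          ring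
        rw [hsum, norm_mul, mul_pow]
        congr 2
        have h2M : ((2 / M : ℂ)) = (((2/(M:ℝ)) : ℝ) : ℂ) := by push_cast; ring
        rw [h2M, Complex.norm_real, Real.norm_of_nonneg (by positivity)]
      rw [hrw, ← Finset.mul_sum, parseval M hM (fun j => ψs n j)]
      field_simp
      ring
    -- ψs vs ψ
    have h4 : ∑ j ∈ T, ‖ψs n j‖^2 ≤ ∑ j ∈ T, ‖ψ n j‖^2 := by
      refine Finset.sum_le_sum fun j hj => ?_
      rw [hstar n j hj]
      have hd := damp_norm (F (‖ψ n j‖ ^ 2) (k / 2))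
        (-V (x j) * k / 2 + G (‖ψ n j‖ ^ 2) (k / 2))
        (hF _ (by positivity) _ (by linarith)) (ψ n j)
      have := pow_le_pow_left₀ (norm_nonneg _) hd 2
      simpa using this
    have heq : ∑ j ∈ T, ‖ψss n j‖^2 = ∑ j ∈ T, ‖ψs n j‖^2 := by
      rw [h2, h3]
      field_simp
    calc ∑ j ∈ T, ‖ψ (n+1) j‖^2 ≤ ∑ j ∈ T, ‖ψss n j‖^2 := h1
      _ = ∑ j ∈ T, ‖ψs n j‖^2 := heq
      _ ≤ ∑ j ∈ T, ‖ψ n j‖^2 := h4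
  have hc : (0:ℝ) ≤ (b - a)/M := by
    apply div_nonneg (by linarith) (by positivity)
  have main : ∀ n : ℕ,
      Real.sqrt (((b - a) / M) * ∑ j ∈ T, ‖ψ (n + 1) j‖ ^ 2) ≤
        Real.sqrt (((b - a) / M) * ∑ j ∈ T, ‖ψ n j‖ ^ 2) := fun n =>
    Real.sqrt_le_sqrt (mul_le_mul_of_nonneg_left (step n) hc)
  refine ⟨main, fun n => ?_⟩
  induction n with
  | zero => exact le_refl _
  | succ n ih => exact (main n).trans ih
end
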